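/- Let m be a nonzero integer, k ≥ 1, and let γ = T^m ∈ SL(2,ℤ). Then the torsion submodule of Q_k(γ) = coker(1 - γ^k) = coker(1 - T^{mk}) is a finite group of cardinality |m|·k, the automorphism g_γ induced by γ acts trivially on it, and consequently c_k(T^m) = |m|·k. -/

import Mathlib

/-! For `γ = T^m` the power `γ^k = T^{mk}` is the shear `[[1, mk], [0, 1]]`, so `1 - γ^k`
has image `mkℤ × 0`. The cokernel is `ℤ/mkℤ ⊕ ℤ`, whose torsion is the image of the first
axis, of order `|mk|`. Shears fix the first axis pointwise, so `g` is the identity on the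
torsion and every orbit is a singleton. -/

/-- `Q_k(γ) = coker(1 - γ^k)`, the cokernel of `1 - γ^k` acting on `Fin 2 → ℤ`. -/
abbrev Qk (γ : Matrix.SpecialLinearGroup (Fin 2) ℤ) (k : ℕ) :=
  (Fin 2 → ℤ) ⧸ LinearMap.range (Matrix.toLin'
    (1 - ((γ ^ k : Matrix.SpecialLinearGroup (Fin 2) ℤ) : Matrix (Fin 2) (Fin 2) ℤ)))

/-- The shear matrix `T = [[1,1],[0,1]]` as an element of `SL(2,ℤ)`. -/
def T : Matrix.SpecialLinearGroup (Fin 2) ℤ :=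
  ⟨!![1, 1; 0, 1], by norm_num [Matrix.det_fin_two_of]⟩

open scoped MatrixGroups

lemma T_zpow (z : ℤ) :
    ((T ^ z : SL(2, ℤ)) : Matrix (Fin 2) (Fin 2) ℤ) = !![1, z; 0, 1] := by
  have T_inv : ((T⁻¹ : SL(2, ℤ)) : Matrix (Fin 2) (Fin 2) ℤ) =
      !![1, -1; 0, 1] := by
    rw [Matrix.SpecialLinearGroup.coe_inv]
    simp [T, Matrix.adjugate_fin_two]
  induction z using Int.induction_on with
  | zero => simp [Matrix.one_fin_two]
  | succ n ih =>
    rw [zpow_add_one, Matrix.SpecialLinearGroup.coe_mul, ih]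
    simp [T, add_comm]
  | pred n ih =>
    rw [zpow_sub_one, Matrix.SpecialLinearGroup.coe_mul, ih, T_inv]
    simp [sub_eq_add_neg, add_comm]

lemma shear_mulVec_single_zero (z a : ℤ) :
    Matrix.mulVec !![1, z; 0, 1] (Pi.single 0 a) = Pi.single 0 a := by
  ext i
  fin_cases i <;> simp [Matrix.mulVec_single]

lemma Nat.card_quot_of_rel_imp_eq {α : Type*} {r : α → α → Prop}
    (h : ∀ x y, r x y → x = y) :
    Nat.card (Quot r) = Nat.card α :=
  Nat.card_congr
    { toFun := Quot.lift id h
      invFun := Quot.mk r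
      left_inv := by rintro ⟨x⟩; rfl
      right_inv := fun _ => rfl }

namespace Qk

variable {γ : SL(2, ℤ)} {k : ℕ} {n : ℤ}

lemma mem_range_iff
    (hγ : ((γ ^ k : SL(2, ℤ)) : Matrix (Fin 2) (Fin 2) ℤ) = !![1, n; 0, 1])
    {w : Fin 2 → ℤ} :
    w ∈ LinearMap.range (Matrix.toLin' (1 - ((γ ^ k : SL(2, ℤ)) :
      Matrix (Fin 2) (Fin 2) ℤ))) ↔ n ∣ w 0 ∧ w 1 = 0 := by
  have hA : (1 - !![1, n; 0, 1] : Matrix (Fin 2) (Fin 2) ℤ) = !![0, -n; 0, 0] := by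
    ext i j; fin_cases i <;> fin_cases j <;> simp
  rw [hγ, hA]
  constructor
  · rintro ⟨v, rfl⟩
    simp [Matrix.toLin'_apply, Matrix.mulVec, dotProduct, Fin.sum_univ_two]
  · rintro ⟨⟨t, ht⟩, h1⟩
    refine ⟨![0, -t], ?_⟩
    ext i
    fin_cases i <;> simp [Matrix.toLin'_apply, Matrix.mulVec, dotProduct, Fin.sum_univ_two, ht, h1]

variable (γ k) in
def fstAxis : ℤ →ₗ[ℤ] Qk γ k :=
  (LinearMap.range _).mkQ ∘ₗ LinearMap.single ℤ (fun _ : Fin 2 => ℤ) 0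

lemma fstAxis_apply (a : ℤ) : fstAxis γ k a = Submodule.Quotient.mk (Pi.single 0 a) := rfl

lemma ker_fstAxis
    (hγ : ((γ ^ k : SL(2, ℤ)) : Matrix (Fin 2) (Fin 2) ℤ) = !![1, n; 0, 1]) :
    LinearMap.ker (fstAxis γ k) = Ideal.span {n} := by
  ext a
  rw [LinearMap.mem_ker, fstAxis_apply, Submodule.Quotient.mk_eq_zero, mem_range_iff hγ,
    Ideal.mem_span_singleton]
  simp

lemma torsion_eq_range_fstAxis
    (hγ : ((γ ^ k : SL(2, ℤ)) : Matrix (Fin 2) (Fin 2) ℤ) = !![1, n; 0, 1])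
    (hn : n ≠ 0) :
    Submodule.torsion ℤ (Qk γ k) = LinearMap.range (fstAxis γ k) := by
  ext x
  obtain ⟨v, rfl⟩ := Submodule.Quotient.mk_surjective _ x
  constructor
  · rintro ⟨c, hc⟩
    rw [← Submodule.Quotient.mk_smul, Submodule.Quotient.mk_eq_zero, mem_range_iff hγ] at hc
    have hv1 : v 1 = 0 := by
      simpa [Submonoid.smul_def, nonZeroDivisors.coe_ne_zero c] using hc.2
    refine ⟨v 0, (Submodule.Quotient.eq _).2 ((mem_range_iff hγ).2 ?_)⟩
    simp [hv1]
  · rintro ⟨a, ha⟩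
    rw [← ha]
    refine ⟨⟨n, mem_nonZeroDivisors_of_ne_zero hn⟩, ?_⟩
    rw [Submonoid.smul_def, ← map_zsmul, ← LinearMap.mem_ker, ker_fstAxis hγ,
      Ideal.mem_span_singleton, smul_eq_mul]
    exact dvd_mul_right n a

lemma card_torsion
    (hγ : ((γ ^ k : SL(2, ℤ)) : Matrix (Fin 2) (Fin 2) ℤ) = !![1, n; 0, 1])
    (hn : n ≠ 0) :
    Nat.card (Submodule.torsion ℤ (Qk γ k)) = n.natAbs := by
  rw [torsion_eq_range_fstAxis hγ hn,
    ← Nat.card_congr (fstAxis γ k).quotKerEquivRange.toEquiv, ker_fstAxis hγ,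
    Nat.card_congr (Int.quotientSpanEquivZMod n).toEquiv, Nat.card_zmod]

end Qk

/-- for `γ = T^m` with `m ≠ 0` and `k ≥ 1`, the torsion submodule of
`Q_k(γ)` has cardinality `|m|·k`, the induced endomorphism `g` acts trivially on it,
and hence `c_k(T^m) = |m|·k`. -/
theorem stmt9 (m : ℤ) (hm : m ≠ 0) (k : ℕ) (hk : 1 ≤ k)
    (g : Module.End ℤ (Qk (T ^ m) k))
    (hg : ∀ v : Fin 2 → ℤ, g (Submodule.Quotient.mk v) =
      Submodule.Quotient.mk (Matrix.mulVec
        (((T ^ m : Matrix.SpecialLinearGroup (Fin 2) ℤ)) : Matrix (Fin 2) (Fin 2) ℤ) v)) :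
    Nat.card (Submodule.torsion ℤ (Qk (T ^ m) k)) = m.natAbs * k ∧
    (∀ x ∈ Submodule.torsion ℤ (Qk (T ^ m) k), g x = x) ∧
    Nat.card (Quot fun x y : Submodule.torsion ℤ (Qk (T ^ m) k) =>
        ∃ j : ℕ, (g ^ j) (x : Qk (T ^ m) k) = (y : Qk (T ^ m) k)) = m.natAbs * k := by
  have hshear : (((T ^ m) ^ k : SL(2, ℤ)) : Matrix (Fin 2) (Fin 2) ℤ) = !![1, m * k; 0, 1] := by
    rw [← zpow_natCast, ← zpow_mul, T_zpow]
  have hmk : m * k ≠ 0 := mul_ne_zero hm (by omega)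
  have hcard : Nat.card (Submodule.torsion ℤ (Qk (T ^ m) k)) = m.natAbs * k := by
    rw [Qk.card_torsion hshear hmk, Int.natAbs_mul, Int.natAbs_natCast]
  have hfix : ∀ x ∈ Submodule.torsion ℤ (Qk (T ^ m) k), g x = x := by
    rw [Qk.torsion_eq_range_fstAxis hshear hmk]
    rintro _ ⟨a, rfl⟩
    rw [Qk.fstAxis_apply, hg, T_zpow, shear_mulVec_single_zero]
  refine ⟨hcard, hfix, ?_⟩
  rw [Nat.card_quot_of_rel_imp_eq, hcard]
  rintro x y ⟨j, hj⟩
  rw [Module.End.coe_pow, Function.iterate_fixed (hfix x x.2)] at hj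
  exact Subtype.ext hj
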